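/- Define f : (0,∞) → ℝ by f(t) = arsinh(1/t) − 1/(t + √(1 + t²)), where arsinh(x) = log(x + √(x² + 1)). Then: (i) f(t) > 0 for all t > 0; (ii) f is strictly decreasing on (0,∞); (iii) f(t)/log(1/t) → 1 as t → 0⁺; (iv) there exists a constant C > 0 such that |t·f(t) − 1/2| ≤ C/t² for all t ≥ 1. -/

import Mathlib

/-!
Rationalising `1/(t + √(1 + t²)) = √(1 + t²) - t` turns `f` into
`arsinh t⁻¹ + t - √(1 + t²)`, whose derivative `1 - √(1 + t²)/t` is negative. The elementary
bounds `x/√(1 + x²) ≤ arsinh x ≤ x` for `x ≥ 0` give positivity and pin `t f(t)` to `1/2` up to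
`O(t⁻²)`, while `arsinh t⁻¹ = log (1 + √(1 + t²)) - log t` isolates the logarithmic singularity.
-/

open Real Filter Set Topology

namespace Real

lemma arsinh_le_self {x : ℝ} (hx : 0 ≤ x) : arsinh x ≤ x :=
  (arsinh_le_arsinh.2 (self_le_sinh_iff.2 hx)).trans_eq (arsinh_sinh x)

-- `arsinh' = (√(1 + y²))⁻¹` is decreasing on `[0, x]`, so it is at least its value at `x`.
lemma div_sqrt_one_add_sq_le_arsinh {x : ℝ} (hx : 0 ≤ x) : x / √(1 + x ^ 2) ≤ arsinh x := by
  have hmvt := (convex_Icc 0 x).mul_sub_le_image_sub_of_le_deriv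
    continuous_arsinh.continuousOn differentiable_arsinh.differentiableOn
    (C := (√(1 + x ^ 2))⁻¹) (fun y hy => by
      rw [interior_Icc] at hy
      rw [(hasDerivAt_arsinh y).deriv]
      gcongr
      exacts [hy.1.le, hy.2.le])
    0 ⟨le_rfl, hx⟩ x ⟨hx, le_rfl⟩ hx
  simpa [div_eq_inv_mul] using hmvt

lemma sqrt_one_add_inv_sq {t : ℝ} (ht : 0 < t) : √(1 + t⁻¹ ^ 2) = √(1 + t ^ 2) / t := by
  rw [show 1 + t⁻¹ ^ 2 = (1 + t ^ 2) / t ^ 2 by field_simp; ring, sqrt_div' _ (sq_nonneg t),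
    sqrt_sq ht.le]

lemma inv_sqrt_one_add_sq_le_arsinh_inv {t : ℝ} (ht : 0 < t) :
    (√(1 + t ^ 2))⁻¹ ≤ arsinh t⁻¹ := by
  have h := div_sqrt_one_add_sq_le_arsinh (inv_nonneg.2 ht.le)
  rwa [sqrt_one_add_inv_sq ht, div_div_eq_mul_div, inv_mul_cancel₀ ht.ne', one_div] at h

lemma arsinh_inv {t : ℝ} (ht : 0 < t) : arsinh t⁻¹ = log (1 + √(1 + t ^ 2)) - log t := by
  rw [arsinh, sqrt_one_add_inv_sq ht, ← log_div (by positivity) ht.ne']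
  congr 1
  field_simp

lemma abs_lt_sqrt_one_add_sq (t : ℝ) : |t| < √(1 + t ^ 2) := by
  rw [← sqrt_sq_eq_abs]
  exact sqrt_lt_sqrt (sq_nonneg t) (by linarith)

lemma lt_sqrt_one_add_sq (t : ℝ) : t < √(1 + t ^ 2) :=
  (le_abs_self t).trans_lt (abs_lt_sqrt_one_add_sq t)

lemma one_div_add_sqrt_one_add_sq (t : ℝ) : 1 / (t + √(1 + t ^ 2)) = √(1 + t ^ 2) - t := by
  have hs := abs_lt_sqrt_one_add_sq t
  have hpos : 0 < t + √(1 + t ^ 2) := by linarith [neg_abs_le t]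
  rw [div_eq_iff hpos.ne']
  nlinarith [sq_sqrt (show (0 : ℝ) ≤ 1 + t ^ 2 by positivity)]

end Real

lemma tendsto_div_nhds_one_of_tendsto_sub {α : Type*} {l : Filter α} {a b : α → ℝ} {c : ℝ}
    (hb : Tendsto b l atTop) (hab : Tendsto (fun x => a x - b x) l (𝓝 c)) :
    Tendsto (fun x => a x / b x) l (𝓝 1) := by
  have h := (hab.mul hb.inv_tendsto_atTop).const_add 1
  rw [mul_zero, add_zero] at h
  refine h.congr' ?_
  filter_upwards [hb.eventually_gt_atTop 0] with x hx
  rw [Pi.inv_apply]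
  field_simp
  ring

/-- The profile `arsinh (1/t) - 1/(t + √(1 + t²))`, with `1/(t + √(1 + t²))` rationalised
to `√(1 + t²) - t`. -/
noncomputable def thinFilmProfile (t : ℝ) : ℝ :=
  arsinh t⁻¹ + t - √(1 + t ^ 2)

lemma thinFilmProfile_eq (t : ℝ) :
    thinFilmProfile t = arsinh (1 / t) - 1 / (t + √(1 + t ^ 2)) := by
  rw [thinFilmProfile, one_div_add_sqrt_one_add_sq, one_div]
  ring

section

variable {t : ℝ}

lemma thinFilmProfile_pos (ht : 0 < t) : 0 < thinFilmProfile t := by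
  have hgap : √(1 + t ^ 2) - t < (√(1 + t ^ 2))⁻¹ := by
    rw [← one_div_add_sqrt_one_add_sq, one_div]
    gcongr
    exact lt_add_of_pos_left _ ht
  have := inv_sqrt_one_add_sq_le_arsinh_inv ht
  rw [thinFilmProfile]
  linarith

lemma hasDerivAt_thinFilmProfile (ht : 0 < t) :
    HasDerivAt thinFilmProfile (1 - √(1 + t ^ 2) / t) t := by
  have hsq := ((hasDerivAt_pow 2 t).const_add 1).sqrt (by positivity)
  refine (((hasDerivAt_inv ht.ne').arsinh.fun_add (hasDerivAt_id' t)).fun_sub hsq).congr_deriv ?_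
  rw [sqrt_one_add_inv_sq ht, smul_eq_mul, Nat.cast_ofNat, pow_one]
  have hs := sq_sqrt (show (0 : ℝ) ≤ 1 + t ^ 2 by positivity)
  field_simp
  linear_combination hs

lemma strictAntiOn_thinFilmProfile : StrictAntiOn thinFilmProfile (Ioi 0) := by
  refine strictAntiOn_of_deriv_neg (convex_Ioi 0)
    (fun t ht => (hasDerivAt_thinFilmProfile ht).continuousAt.continuousWithinAt) fun t ht => ?_
  rw [interior_Ioi] at ht
  rw [(hasDerivAt_thinFilmProfile ht).deriv, sub_neg, one_lt_div ht]
  exact lt_sqrt_one_add_sq t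

-- `thinFilmProfile t - log t⁻¹ = log (1 + √(1 + t²)) + t - √(1 + t²)` stays bounded as `t → 0`.
lemma tendsto_thinFilmProfile_div_log :
    Tendsto (fun t => thinFilmProfile t / log t⁻¹) (𝓝[>] 0) (𝓝 1) := by
  have hlog : Tendsto (fun t : ℝ => log t⁻¹) (𝓝[>] 0) atTop :=
    tendsto_log_atTop.comp tendsto_inv_nhdsGT_zero
  have hrem : Continuous fun t : ℝ => log (1 + √(1 + t ^ 2)) + t - √(1 + t ^ 2) :=
    (((by fun_prop : Continuous fun t : ℝ => 1 + √(1 + t ^ 2)).log fun t => by positivity).add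
      continuous_id).sub (by fun_prop)
  refine tendsto_div_nhds_one_of_tendsto_sub hlog
    (((hrem.tendsto 0).mono_left nhdsWithin_le_nhds).congr' ?_)
  filter_upwards [self_mem_nhdsWithin] with t (ht : 0 < t)
  rw [thinFilmProfile, arsinh_inv ht, log_inv]
  ring

lemma abs_mul_thinFilmProfile_sub_half_le (ht : 0 < t) :
    |t * thinFilmProfile t - 1 / 2| ≤ 1 / t ^ 2 := by
  set s := √(1 + t ^ 2)
  have hs2 : s ^ 2 = 1 + t ^ 2 := sq_sqrt (by positivity)
  have hts : t < s := lt_sqrt_one_add_sq t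
  have hs : 0 < s := ht.trans hts
  have hup : t * arsinh t⁻¹ ≤ 1 := by
    calc t * arsinh t⁻¹ ≤ t * t⁻¹ := by gcongr; exact arsinh_le_self (inv_nonneg.2 ht.le)
      _ = 1 := mul_inv_cancel₀ ht.ne'
  have hlo : t / s ≤ t * arsinh t⁻¹ := by
    rw [div_eq_mul_inv]
    gcongr
    exact inv_sqrt_one_add_sq_le_arsinh_inv ht
  have hut : (s - t) * t ≤ 1 / 2 := by nlinarith
  have hsq : 1 / 2 + t ^ 2 - t * s = (s - t) ^ 2 / 2 := by linear_combination -hs2 / 2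
  have hsq_le : (s - t) ^ 2 / 2 ≤ 1 / t ^ 2 := by
    rw [le_div_iff₀ (by positivity)]
    nlinarith [mul_nonneg (sub_pos.2 hts).le ht.le]
  have hratio : t / s = 1 - (s - t) / s := by field_simp; ring
  have hratio_le : (s - t) / s ≤ 1 / t ^ 2 := by
    rw [div_le_div_iff₀ hs (by positivity)]
    nlinarith
  rw [thinFilmProfile, abs_le]
  constructor <;> linarith [sq_nonneg (s - t)]

end

/-- Properties of the profile function `f(t) = arsinh(1/t) - 1/(t + √(1 + t²))`
of the thin-film kernel: (i) positivity on `(0,∞)`; (ii) strict monotone decrease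
on `(0,∞)`; (iii) `f(t)/log(1/t) → 1` as `t → 0⁺`; (iv) `|t f(t) - 1/2| ≤ C/t²`
for `t ≥ 1`. -/
theorem stmt_8 (f : ℝ → ℝ)
    (hf : ∀ t : ℝ, 0 < t → f t = Real.arsinh (1 / t) - 1 / (t + Real.sqrt (1 + t ^ 2))) :
    (∀ t : ℝ, 0 < t → 0 < f t) ∧
    StrictAntiOn f (Set.Ioi 0) ∧
    Filter.Tendsto (fun t => f t / Real.log (1 / t)) (nhdsWithin 0 (Set.Ioi 0)) (nhds 1) ∧
    ∃ C : ℝ, 0 < C ∧ ∀ t : ℝ, 1 ≤ t → |t * f t - 1 / 2| ≤ C / t ^ 2 := by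
  have hf' : EqOn f thinFilmProfile (Ioi 0) := fun t ht =>
    (hf t ht).trans (thinFilmProfile_eq t).symm
  refine ⟨fun t ht => hf' ht ▸ thinFilmProfile_pos ht, strictAntiOn_thinFilmProfile.congr hf'.symm,
    ?_, 1, one_pos, fun t ht => ?_⟩
  · refine tendsto_thinFilmProfile_div_log.congr' ?_
    filter_upwards [self_mem_nhdsWithin] with t ht
    rw [hf' ht, one_div]
  · have ht0 : 0 < t := one_pos.trans_le ht
    rw [hf' ht0]
    exact abs_mul_thinFilmProfile_sub_half_le ht0
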